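/- Let H₀ be a self-adjoint operator on a finite-dimensional Hilbert space with nonnegative spectrum and unique ground state |E₀⟩ with eigenvalue 0. For a > 0, b > 0, β > 0, define ρ(a) := Σ_I (e^{−β(a+bE_I)}/(1 − e^{−β(a+bE_I)}))·|E_I⟩⟨E_I| summed over an orthonormal eigenbasis {|E_I⟩} with eigenvalues E_I. Then the normalized states ρ(a)/Tr ρ(a) converge to |E₀⟩⟨E₀| as a → 0⁺. -/

import Mathlib

/-!
Both `ρ(a)` and its trace are sums over the eigenbasis with the Bose–Einstein weights
`w_I(a) = (e^{β(a + b E_I)} - 1)⁻¹`, since each rank-one projector has trace one. The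
ground-state weight `(e^{βa} - 1)⁻¹` tends to `+∞` as `a → 0⁺`, while every excited weight
has the finite limit `(e^{β b E_I} - 1)⁻¹`. Dividing numerator and denominator by
`w_{I₀}(a)`, the normalized weights tend to the indicator of `I₀`.
-/

open Filter Topology

namespace Submodule

variable {𝕜 E : Type*} [RCLike 𝕜] [NormedAddCommGroup E] [InnerProductSpace 𝕜 E]
  [FiniteDimensional 𝕜 E]

theorem trace_starProjection (K : Submodule 𝕜 E) :
    LinearMap.trace 𝕜 E K.starProjection = Module.finrank 𝕜 K :=
  LinearMap.IsProj.trace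
    ⟨K.starProjection_apply_mem, fun _ hx => starProjection_eq_self_iff.mpr hx⟩

theorem trace_starProjection_span_singleton {x : E} (hx : x ≠ 0) :
    LinearMap.trace 𝕜 E (𝕜 ∙ x).starProjection = 1 := by
  rw [trace_starProjection, finrank_span_singleton hx, Nat.cast_one]

end Submodule

theorem tendsto_div_sum_of_tendsto_atTop {α ι : Type*} [Fintype ι] [DecidableEq ι]
    {l : Filter α} {w : α → ι → ℝ} {i₀ : ι} (h₀ : Tendsto (w · i₀) l atTop)
    (h : ∀ i ≠ i₀, ∃ c, Tendsto (w · i) l (𝓝 c)) (i : ι) :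
    Tendsto (fun a => w a i / ∑ j, w a j) l (𝓝 ((Pi.single i₀ 1 : ι → ℝ) i)) := by
  have hne : ∀ᶠ a in l, w a i₀ ≠ 0 := h₀.eventually_ne_atTop 0
  have hrel : ∀ j,
      Tendsto (fun a => w a j / w a i₀) l (𝓝 ((Pi.single i₀ 1 : ι → ℝ) j)) := by
    intro j
    rcases eq_or_ne j i₀ with rfl | hj
    · rw [Pi.single_eq_same]
      exact tendsto_const_nhds.congr' (hne.mono fun a ha => (div_self ha).symm)
    · obtain ⟨c, hc⟩ := h j hj
      rw [Pi.single_eq_of_ne hj]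
      exact hc.div_atTop h₀
  have hsum : Tendsto (fun a => (∑ j, w a j) / w a i₀) l (𝓝 1) := by
    simpa only [Finset.sum_div, Finset.sum_pi_single', Finset.mem_univ, if_true]
      using tendsto_finsetSum Finset.univ fun j _ => hrel j
  have hquot := (hrel i).div hsum one_ne_zero
  rw [div_one] at hquot
  exact hquot.congr' (hne.mono fun a ha => div_div_div_cancel_right₀ ha _ _)

theorem tendsto_inv_sum_smul_sum_smul {α ι 𝕜 M : Type*} [Fintype ι] [RCLike 𝕜]
    [AddCommMonoid M] [TopologicalSpace M] [ContinuousAdd M] [Module 𝕜 M] [ContinuousSMul 𝕜 M]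
    {l : Filter α} {w : α → ι → ℝ} {i₀ : ι} (h₀ : Tendsto (w · i₀) l atTop)
    (h : ∀ i ≠ i₀, ∃ c, Tendsto (w · i) l (𝓝 c)) (P : ι → M) :
    Tendsto (fun a => ((∑ j, w a j : ℝ) : 𝕜)⁻¹ • ∑ i, (w a i : 𝕜) • P i) l (𝓝 (P i₀)) := by
  classical
  have hlim : Tendsto (fun a => ∑ i, ((w a i / ∑ j, w a j : ℝ) : 𝕜) • P i) l
      (𝓝 (∑ i, ((Pi.single i₀ 1 : ι → ℝ) i : 𝕜) • P i)) :=
    tendsto_finsetSum _ fun i _ =>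
      ((RCLike.continuous_ofReal.tendsto _).comp
        (tendsto_div_sum_of_tendsto_atTop h₀ h i)).smul_const (P i)
  convert hlim using 1
  · ext a
    simp only [Finset.smul_sum, smul_smul, div_eq_inv_mul, RCLike.ofReal_mul,
      RCLike.ofReal_inv]
  · simp [Pi.single_apply]

noncomputable def boseEinsteinWeight (x : ℝ) : ℝ := (Real.exp x - 1)⁻¹

theorem exp_neg_div_one_sub_exp_neg (x : ℝ) :
    Real.exp (-x) / (1 - Real.exp (-x)) = boseEinsteinWeight x := by
  have := Real.exp_pos x
  rw [boseEinsteinWeight, Real.exp_neg]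
  field_simp

theorem continuousAt_boseEinsteinWeight {x : ℝ} (hx : x ≠ 0) :
    ContinuousAt boseEinsteinWeight x :=
  ((Real.continuous_exp.sub continuous_const).continuousAt).inv₀
    (sub_ne_zero.mpr (mt (Real.exp_eq_one_iff x).mp hx))

theorem tendsto_boseEinsteinWeight_nhdsGT_zero :
    Tendsto boseEinsteinWeight (𝓝[>] 0) atTop := by
  refine tendsto_inv_nhdsGT_zero.comp ?_
  have : ContinuousWithinAt (fun x => Real.exp x - 1) (Set.Ioi 0) 0 := by fun_prop
  have h := this.tendsto_nhdsWithin (t := Set.Ioi 0) fun x hx =>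
    sub_pos.mpr (Real.one_lt_exp_iff.mpr hx)
  rwa [Real.exp_zero, sub_self] at h

theorem entropic_ground_state_limit_general {H : Type*} [NormedAddCommGroup H]
    [InnerProductSpace ℂ H] [FiniteDimensional ℂ H]
    {I : Type*} [Fintype I] (v : OrthonormalBasis I ℂ H)
    (E : I → ℝ)
    (i₀ : I) (hE0 : E i₀ = 0) (hpos : ∀ i, i ≠ i₀ → 0 < E i)
    (b β : ℝ) (hb : 0 < b) (hβ : 0 < β) :
    Tendsto (fun a : ℝ =>
        (LinearMap.trace ℂ H
            ((∑ i, ((Real.exp (-(β * (a + b * E i)))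
                  / (1 - Real.exp (-(β * (a + b * E i)))) : ℝ) : ℂ) •
                ((ℂ ∙ (v i)).subtypeL ∘L Submodule.orthogonalProjectionOnto (ℂ ∙ (v i)))
              : H →L[ℂ] H) : H →ₗ[ℂ] H))⁻¹ •
          (∑ i, ((Real.exp (-(β * (a + b * E i)))
                / (1 - Real.exp (-(β * (a + b * E i)))) : ℝ) : ℂ) •
              ((ℂ ∙ (v i)).subtypeL ∘L Submodule.orthogonalProjectionOnto (ℂ ∙ (v i)))))
      (nhdsWithin 0 (Set.Ioi 0))
      (nhds ((ℂ ∙ (v i₀)).subtypeL ∘L Submodule.orthogonalProjectionOnto (ℂ ∙ (v i₀)))) := by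
  have hP : ∀ i, (ℂ ∙ v i).subtypeL ∘L (ℂ ∙ v i).orthogonalProjectionOnto =
      (ℂ ∙ v i).starProjection := fun _ => rfl
  have htrace : ∀ c : I → ℝ, LinearMap.trace ℂ H
      ((∑ i, (c i : ℂ) • (ℂ ∙ v i).starProjection : H →L[ℂ] H) : H →ₗ[ℂ] H) =
        ((∑ i, c i : ℝ) : ℂ) := by
    intro c
    simp [map_sum, Submodule.trace_starProjection_span_singleton (v.orthonormal.ne_zero _)]
  set w : ℝ → I → ℝ := fun a i => boseEinsteinWeight (β * (a + b * E i))
  have hground : Tendsto (w · i₀) (𝓝[>] 0) atTop := by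
    have hβa : Tendsto (β * ·) (𝓝[>] 0) (𝓝[>] 0) := by
      refine tendsto_nhdsWithin_iff.mpr
        ⟨?_, eventually_nhdsWithin_of_forall fun a ha => mul_pos hβ ha⟩
      simpa using ((continuous_const_mul β).tendsto 0).mono_left nhdsWithin_le_nhds
    have hw : (w · i₀) = boseEinsteinWeight ∘ (β * ·) := by
      ext a
      simp [w, hE0]
    exact hw ▸ tendsto_boseEinsteinWeight_nhdsGT_zero.comp hβa
  have hexcited : ∀ i ≠ i₀, Tendsto (w · i) (𝓝[>] 0) (𝓝 (w 0 i)) := fun i hi =>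
    ((continuousAt_boseEinsteinWeight (by positivity [hpos i hi])).comp
      (by fun_prop)).tendsto.mono_left nhdsWithin_le_nhds
  simp only [hP, htrace, exp_neg_div_one_sub_exp_neg]
  exact tendsto_inv_sum_smul_sum_smul hground (fun i hi => ⟨_, hexcited i hi⟩) _

/-- Let `H₀` be self-adjoint on a finite-dimensional Hilbert space with nonnegative
eigenvalues `E_I` (orthonormal eigenbasis `v`), a unique ground state `v i₀` with
eigenvalue `0`, and `E_I > 0` otherwise.  For `a, b, β > 0` put
`ρ(a) = Σ_I (e^{−β(a+bE_I)}/(1 − e^{−β(a+bE_I)}))·|E_I⟩⟨E_I|`.  Then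
`ρ(a)/Tr ρ(a) → |E₀⟩⟨E₀|` as `a → 0⁺`. -/
theorem entropic_ground_state_limit {H : Type*} [NormedAddCommGroup H]
    [InnerProductSpace ℂ H] [FiniteDimensional ℂ H]
    {I : Type*} [Fintype I] (v : OrthonormalBasis I ℂ H)
    (H₀ : H →L[ℂ] H) (hsa : IsSelfAdjoint H₀) (E : I → ℝ)
    (heig : ∀ i, H₀ (v i) = (E i : ℂ) • v i)
    (i₀ : I) (hE0 : E i₀ = 0) (hpos : ∀ i, i ≠ i₀ → 0 < E i)
    (b β : ℝ) (hb : 0 < b) (hβ : 0 < β) :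
    Tendsto (fun a : ℝ =>
        (LinearMap.trace ℂ H
            ((∑ i, ((Real.exp (-(β * (a + b * E i)))
                  / (1 - Real.exp (-(β * (a + b * E i)))) : ℝ) : ℂ) •
                ((ℂ ∙ (v i)).subtypeL ∘L Submodule.orthogonalProjectionOnto (ℂ ∙ (v i)))
              : H →L[ℂ] H) : H →ₗ[ℂ] H))⁻¹ •
          (∑ i, ((Real.exp (-(β * (a + b * E i)))
                / (1 - Real.exp (-(β * (a + b * E i)))) : ℝ) : ℂ) •
              ((ℂ ∙ (v i)).subtypeL ∘L Submodule.orthogonalProjectionOnto (ℂ ∙ (v i)))))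
      (nhdsWithin 0 (Set.Ioi 0))
      (nhds ((ℂ ∙ (v i₀)).subtypeL ∘L Submodule.orthogonalProjectionOnto (ℂ ∙ (v i₀)))) :=
  entropic_ground_state_limit_general v E i₀ hE0 hpos b β hb hβ
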